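/- arXiv:1902.04429 — 8 statements merged into one kernel-verified Lean document; each statement's English description precedes it below -/
import Mathlib

section
/- The numerical wavenumber of the tenth-order compact scheme C10 (α₁ = 1/2, α₂ = 1/20, a₁ = 17/24, a₂ = 101/600, a₃ = 1/600), K(z) = ((17/12)·sin z + (101/300)·sin 2z + (1/300)·sin 3z) / (1 + cos z + (1/10)·cos 2z), satisfies K(z) − z = O(z¹¹) as z → 0. -/
/-!
Multiply the numerator of `K z - z` by `I` and write every `sin (k z)` and `cos (k z)` through
`exp (± i k z)`. Replacing each exponential by its Taylor polynomial plus remainder, the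
polynomial parts cancel identically (this is the tenth-order design of the C10 weights), so the
numerator is a fixed combination of remainders of order `z ^ 11`. The denominator
`1 + cos z + cos (2 z) / 10 = (2 (cos z + 1)² + 6 (cos z + 1) + 1) / 10` is at least `1 / 10`.
-/

open Filter Asymptotics Topology Complex

noncomputable def expRemainder (n : ℕ) (w : ℂ) : ℂ :=
  exp w - ∑ j ∈ Finset.range n, w ^ j / j.factorial

lemma expRemainder_mul_ofReal_isBigO (n : ℕ) (c : ℂ) :
    (fun z : ℝ => expRemainder n (c * z)) =O[𝓝 0] fun z : ℝ => z ^ n := by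
  have hc : Tendsto (fun z : ℝ => c * z) (𝓝 0) (𝓝 0) := by
    simpa using (by fun_prop : Continuous fun z : ℝ => c * z).tendsto 0
  refine ((exp_sub_sum_range_isBigO_pow n).comp_tendsto hc).trans ?_
  exact IsBigO.of_bound (‖c‖ ^ n) (Eventually.of_forall fun z => by simp [mul_pow])

noncomputable def c10Numerator (z : ℝ) : ℝ :=
  (17/12) * Real.sin z + (101/300) * Real.sin (2*z) + (1/300) * Real.sin (3*z)

noncomputable def c10Denominator (z : ℝ) : ℝ :=
  1 + Real.cos z + (1/10) * Real.cos (2*z)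

lemma one_tenth_le_c10Denominator (z : ℝ) : 1/10 ≤ c10Denominator z := by
  rw [c10Denominator, Real.cos_two_mul]
  nlinarith [Real.neg_one_le_cos z, sq_nonneg (Real.cos z + 1)]

noncomputable def c10Defect (z : ℝ) : ℝ :=
  c10Numerator z - z * c10Denominator z

lemma I_mul_c10Defect_eq (z : ℝ) :
    I * (c10Defect z : ℂ) =
      17/24 * (expRemainder 11 (I * z) - expRemainder 11 (-I * z))
        + 101/600 * (expRemainder 11 (2 * I * z) - expRemainder 11 (-2 * I * z))
        + 1/600 * (expRemainder 11 (3 * I * z) - expRemainder 11 (-3 * I * z))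
        - 1/2 * (z * I * expRemainder 10 (I * z) + z * I * expRemainder 10 (-I * z))
        - 1/20 * (z * I * expRemainder 10 (2 * I * z) + z * I * expRemainder 10 (-2 * I * z)) := by
  simp only [c10Defect, c10Numerator, c10Denominator, expRemainder, Finset.sum_range_succ,
    Finset.sum_range_zero, Nat.factorial]
  push_cast
  simp only [sin, cos]
  ring_nf
  simp only [I_sq]
  ring_nf

lemma c10Defect_isBigO : c10Defect =O[𝓝 0] fun z : ℝ => z ^ 11 := by
  have h11 (c : ℂ) := expRemainder_mul_ofReal_isBigO 11 c
  have h10 (c : ℂ) :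
      (fun z : ℝ => z * I * expRemainder 10 (c * z)) =O[𝓝 0] fun z : ℝ => z ^ 11 := by
    have hzI : (fun z : ℝ => (z * I : ℂ)) =O[𝓝 0] fun z : ℝ => z :=
      IsBigO.of_bound 1 (Eventually.of_forall fun z => by simp)
    simpa [pow_succ'] using hzI.mul (expRemainder_mul_ofReal_isBigO 10 c)
  have hI : (fun z : ℝ => I * (c10Defect z : ℂ)) =O[𝓝 0] fun z : ℝ => z ^ 11 := by
    simp_rw [I_mul_c10Defect_eq]
    exact ((h11 _).sub (h11 _)).const_mul_left _
      |>.add (((h11 _).sub (h11 _)).const_mul_left _)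
      |>.add (((h11 _).sub (h11 _)).const_mul_left _)
      |>.sub (((h10 _).add (h10 _)).const_mul_left _)
      |>.sub (((h10 _).add (h10 _)).const_mul_left _)
  have hnorm := hI.norm_left
  simp only [norm_mul, norm_I, one_mul, norm_real] at hnorm
  exact hnorm.of_norm_left

/-- The numerical wavenumber of the C10 compact scheme agrees with the exact
wavenumber `z` up to `O(z^11)` as `z → 0`. -/
theorem c10_wavenumber (K : ℝ → ℝ)
    (hK : ∀ z : ℝ, K z = ((17/12) * Real.sin z + (101/300) * Real.sin (2*z) + (1/300) * Real.sin (3*z)) / (1 + Real.cos z + (1/10) * Real.cos (2*z))) :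
    (fun z : ℝ => K z - z) =O[𝓝 (0 : ℝ)] fun z : ℝ => z ^ 11 := by
  refine IsBigO.trans (IsBigO.of_bound 10 (Eventually.of_forall fun z => ?_)) c10Defect_isBigO
  have hD := one_tenth_le_c10Denominator z
  have hKz : K z - z = c10Defect z / c10Denominator z := by
    rw [hK z, c10Defect, ← c10Numerator, ← c10Denominator]
    field_simp
  rw [hKz, norm_div, Real.norm_of_nonneg (show 0 ≤ c10Denominator z by linarith),
    div_le_iff₀ (by linarith)]
  nlinarith [norm_nonneg (c10Defect z)]
end

section
/- The numerical wavenumber of the twelfth-order compact scheme C12 (α₁ = 9/16, α₂ = 9/100, α₃ = 1/400, a₁ = 21/32, a₂ = 231/1000, a₃ = 49/4000), K(z) = ((21/16)·sin z + (231/500)·sin 2z + (49/2000)·sin 3z) / (1 + (9/8)·cos z + (9/50)·cos 2z + (1/200)·cos 3z), satisfies K(z) − z = O(z¹³) as z → 0. -/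
/-!
Writing `K = N / D`, it suffices that `N z - z * D z = O(z^13)`, since `D 0 = 231/100 ≠ 0`.
Replacing every `sin (k z)` by its Taylor polynomial of degree 11 and every `cos (k z)` by
its Taylor polynomial of degree 10 costs `O(z^13)` in `N - z D`, and the resulting polynomial
of degree 11 vanishes identically: its coefficients are exactly the order conditions satisfied
by the C12 weights.
-/

open Filter Asymptotics Topology Finset
open scoped Nat

theorem Asymptotics.IsBigO.comp_const_mul_pow {𝕜 E : Type*} [NormedField 𝕜] [Norm E]
    {f : 𝕜 → E} {n : ℕ} (hf : f =O[𝓝 0] (· ^ n)) (k : 𝕜) :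
    (fun z => f (k * z)) =O[𝓝 0] (· ^ n) := by
  have hk : Tendsto (fun z : 𝕜 => k * z) (𝓝 0) (𝓝 0) := by
    simpa using (continuous_const_mul k).tendsto 0
  refine (hf.comp_tendsto hk).trans ?_
  simpa only [Function.comp_def, mul_pow] using
    (isBigO_refl (· ^ n) (𝓝 (0 : 𝕜))).const_mul_left (k ^ n)

theorem Asymptotics.IsBigO.div_sub_of_tendsto {α 𝕜 E : Type*} [NormedField 𝕜] [Norm E]
    {l : Filter α} {f g u : α → 𝕜} {h : α → E} {c : 𝕜}
    (hg : Tendsto g l (𝓝 c)) (hc : c ≠ 0) (hfg : (fun x => f x - u x * g x) =O[l] h) :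
    (fun x => f x / g x - u x) =O[l] h := by
  have hbound : (fun x => (f x - u x * g x) * (g x)⁻¹) =O[l] fun x => f x - u x * g x := by
    simpa using (isBigO_refl (fun x => f x - u x * g x) l).mul ((hg.inv₀ hc).isBigO_one 𝕜)
  refine (hbound.trans hfg).congr' ?_ EventuallyEq.rfl
  filter_upwards [hg.eventually_ne hc] with x hx
  field_simp

theorem Complex.exp_ofReal_mul_I_sub_sum_isBigO (n : ℕ) :
    (fun t : ℝ =>
      Complex.exp (t * Complex.I) - ∑ i ∈ range n, ((t : ℂ) * Complex.I) ^ i / i !)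
      =O[𝓝 0] (· ^ n) := by
  have hI : Tendsto (fun t : ℝ => (t : ℂ) * Complex.I) (𝓝 0) (𝓝 0) :=
    Continuous.tendsto' (by fun_prop) 0 0 (by simp)
  refine ((Complex.exp_sub_sum_range_isBigO_pow n).comp_tendsto hI).trans
    (isBigO_of_le _ fun t => ?_)
  simp [norm_pow]

theorem Real.sin_sub_im_sum_isBigO (n : ℕ) :
    (fun t : ℝ => Real.sin t - (∑ i ∈ range n, ((t : ℂ) * Complex.I) ^ i / i !).im)
      =O[𝓝 0] (· ^ n) := by
  refine (isBigO_of_le _ fun t => ?_).trans (Complex.exp_ofReal_mul_I_sub_sum_isBigO n)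
  rw [Real.norm_eq_abs, ← Complex.exp_ofReal_mul_I_im, ← Complex.sub_im]
  exact Complex.abs_im_le_norm _

theorem Real.cos_sub_re_sum_isBigO (n : ℕ) :
    (fun t : ℝ => Real.cos t - (∑ i ∈ range n, ((t : ℂ) * Complex.I) ^ i / i !).re)
      =O[𝓝 0] (· ^ n) := by
  refine (isBigO_of_le _ fun t => ?_).trans (Complex.exp_ofReal_mul_I_sub_sum_isBigO n)
  rw [Real.norm_eq_abs, ← Complex.exp_ofReal_mul_I_re, ← Complex.sub_re]
  exact Complex.abs_re_le_norm _

noncomputable def sinTaylor11 (t : ℝ) : ℝ :=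
  t - t ^ 3 / 6 + t ^ 5 / 120 - t ^ 7 / 5040 + t ^ 9 / 362880 - t ^ 11 / 39916800

noncomputable def cosTaylor10 (t : ℝ) : ℝ :=
  1 - t ^ 2 / 2 + t ^ 4 / 24 - t ^ 6 / 720 + t ^ 8 / 40320 - t ^ 10 / 3628800

theorem Real.sin_sub_sinTaylor11_isBigO :
    (fun t => Real.sin t - sinTaylor11 t) =O[𝓝 0] (· ^ 13) := by
  convert Real.sin_sub_im_sum_isBigO 13 using 3 with t
  simp only [sinTaylor11, pow_succ, pow_zero, one_mul, mul_pow, sum_range_succ, range_one,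
    sum_singleton, mul_one, Nat.factorial, Nat.cast_one, ne_eq, one_ne_zero, not_false_eq_true,
    div_self, Nat.succ_eq_add_one, zero_add, div_one, Complex.I_mul_I, mul_neg, Nat.reduceAdd,
    Nat.cast_ofNat, neg_mul, Nat.reduceMul, neg_neg, Complex.add_im, Complex.one_im,
    Complex.mul_im, Complex.ofReal_re, Complex.I_im, Complex.ofReal_im, Complex.I_re, mul_zero,
    add_zero, Complex.div_ofNat_im, Complex.neg_im, zero_mul, neg_zero, zero_div, Complex.mul_re,
    sub_zero]
  ring

theorem Real.cos_sub_cosTaylor10_isBigO :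
    (fun t => Real.cos t - cosTaylor10 t) =O[𝓝 0] (· ^ 12) := by
  convert Real.cos_sub_re_sum_isBigO 12 using 3 with t
  simp only [cosTaylor10, pow_succ, pow_zero, one_mul, mul_pow, sum_range_succ, range_one,
    sum_singleton, mul_one, Nat.factorial, Nat.cast_one, ne_eq, one_ne_zero, not_false_eq_true,
    div_self, Nat.succ_eq_add_one, zero_add, div_one, Complex.I_mul_I, mul_neg, Nat.reduceAdd,
    Nat.cast_ofNat, neg_mul, Nat.reduceMul, neg_neg, Complex.add_re, Complex.one_re,
    Complex.mul_re, Complex.ofReal_re, Complex.I_re, mul_zero, Complex.ofReal_im, Complex.I_im,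
    sub_self, add_zero, Complex.div_ofNat_re, Complex.neg_re, sub_zero, Complex.mul_im, zero_mul,
    neg_zero, zero_div]
  ring

noncomputable def c12Num (z : ℝ) : ℝ :=
  (21/16) * Real.sin z + (231/500) * Real.sin (2*z) + (49/2000) * Real.sin (3*z)

noncomputable def c12Den (z : ℝ) : ℝ :=
  1 + (9/8) * Real.cos z + (9/50) * Real.cos (2*z) + (1/200) * Real.cos (3*z)

theorem c12_order_conditions (z : ℝ) :
    (21/16) * sinTaylor11 z + (231/500) * sinTaylor11 (2*z) + (49/2000) * sinTaylor11 (3*z)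
      = z * (1 + (9/8) * cosTaylor10 z + (9/50) * cosTaylor10 (2*z)
        + (1/200) * cosTaylor10 (3*z)) := by
  simp only [sinTaylor11, cosTaylor10]
  ring

theorem c12Num_sub_mul_c12Den_isBigO :
    (fun z => c12Num z - z * c12Den z) =O[𝓝 0] (· ^ 13) := by
  have hsin := Real.sin_sub_sinTaylor11_isBigO
  have hcos := Real.cos_sub_cosTaylor10_isBigO
  have hsum := ((hsin.const_mul_left (21/16)).add
    ((hsin.comp_const_mul_pow 2).const_mul_left (231/500))).add
    ((hsin.comp_const_mul_pow 3).const_mul_left (49/2000))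
  have hzsum := ((isBigO_refl (fun z => z) (𝓝 (0 : ℝ))).mul
    (((hcos.const_mul_left (9/8)).add ((hcos.comp_const_mul_pow 2).const_mul_left (9/50))).add
      ((hcos.comp_const_mul_pow 3).const_mul_left (1/200)))).congr_right
    fun z => (pow_succ' z 12).symm
  refine (hsum.sub hzsum).congr_left fun z => ?_
  simp only [c12Num, c12Den]
  linear_combination -c12_order_conditions z

/-- The numerical wavenumber of the C12 compact scheme agrees with the exact
wavenumber `z` up to `O(z^13)` as `z → 0`. -/
theorem c12_wavenumber (K : ℝ → ℝ)
    (hK : ∀ z : ℝ, K z = ((21/16) * Real.sin z + (231/500) * Real.sin (2*z) + (49/2000) * Real.sin (3*z)) / (1 + (9/8) * Real.cos z + (9/50) * Real.cos (2*z) + (1/200) * Real.cos (3*z))) :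
    (fun z : ℝ => K z - z) =O[𝓝 (0 : ℝ)] fun z : ℝ => z ^ 13 := by
  have hDen : Continuous c12Den := by unfold c12Den; fun_prop
  simp only [hK]
  exact c12Num_sub_mul_c12Den_isBigO.div_sub_of_tendsto (hDen.tendsto 0) (by norm_num [c12Den])
end

section
/- The numerical wavenumber of the fourteenth-order compact scheme C14 (α₁ = 3/5, α₂ = 3/25, α₃ = 1/175, a₁ = 31/50, a₂ = 67/250, a₃ = 283/12250, a₄ = 1/9800), K(z) = ((31/25)·sin z + (67/125)·sin 2z + (283/6125)·sin 3z + (1/4900)·sin 4z) / (1 + (6/5)·cos z + (6/25)·cos 2z + (2/175)·cos 3z), satisfies K(z) − z = O(z¹⁵) as z → 0. -/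
/-!
Clearing the denominator, `K z - z = (N z - z * D z) / D z` with `D 0 ≠ 0`, so it suffices that
the residual `N z - z * D z` vanishes to order 15 at `0`. For `N z = ∑ aⱼ sin (ωⱼ z)` and
`D z = ∑ bⱼ cos (ωⱼ z)` the Leibniz rule gives
`(N - z D)⁽ⁿ⁺¹⁾(0) = cos⁽ⁿ⁾(0) * (∑ aⱼ ωⱼ ^ (n + 1) - (n + 1) ∑ bⱼ ωⱼ ^ n)`, which vanishes for odd `n`;
for even `n = 2m` the bracket is the classical order condition of the scheme. These hold for
`m ≤ 6` with the C14 weights, and Taylor's theorem turns the vanishing derivatives into `O(z ^ 15)`.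
-/

open Filter Asymptotics Topology

open Finset in
theorem isBigO_pow_of_iteratedDeriv_eq_zero {E : Type*} [NormedAddCommGroup E] [NormedSpace ℝ E]
    {f : ℝ → E} {x₀ : ℝ} {n : ℕ} (hf : ContDiff ℝ n f) (h : ∀ k < n, iteratedDeriv k f x₀ = 0) :
    f =O[𝓝 x₀] fun x => (x - x₀) ^ n := by
  have htaylor : taylorWithinEval f n Set.univ x₀
      = fun x => (x - x₀) ^ n • ((n.factorial : ℝ)⁻¹ • iteratedDeriv n f x₀) := by
    ext x
    rw [taylor_within_apply, sum_range_succ, sum_eq_zero fun k hk => by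
      rw [iteratedDerivWithin_univ, h k (mem_range.mp hk), smul_zero]]
    rw [zero_add, iteratedDerivWithin_univ, smul_smul, mul_comm]
  have hT : taylorWithinEval f n Set.univ x₀ =O[𝓝 x₀] fun x => (x - x₀) ^ n := by
    rw [htaylor]
    exact isBigO_of_le' _ fun x => by rw [norm_smul, mul_comm]
  simpa using (taylor_isLittleO_univ hf).isBigO.add hT

theorem iteratedDeriv_succ_id_mul_zero {𝕜 : Type*} [NontriviallyNormedField 𝕜] {g : 𝕜 → 𝕜}
    {n : ℕ} (hg : ContDiff 𝕜 (n + 1) g) :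
    iteratedDeriv (n + 1) (fun z => z * g z) 0 = (n + 1) * iteratedDeriv n g 0 := by
  rw [iteratedDeriv_fun_mul (f := fun z => z) (by fun_prop) (by exact_mod_cast hg.contDiffAt),
    Finset.sum_eq_single 1 (fun i _ hi => by simp [iteratedDeriv_fun_id_zero, hi])
      (fun h => absurd (Finset.mem_range.mpr (by omega)) h)]
  simp [iteratedDeriv_fun_id_zero]

theorem iteratedDeriv_sum_mul_comp_const_mul {𝕜 ι : Type*} [NontriviallyNormedField 𝕜]
    {f : 𝕜 → 𝕜} {n : ℕ} (hf : ContDiff 𝕜 n f) (s : Finset ι) (a ω : ι → 𝕜) (x : 𝕜) :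
    iteratedDeriv n (fun z => ∑ j ∈ s, a j * f (ω j * z)) x
      = ∑ j ∈ s, a j * ω j ^ n * iteratedDeriv n f (ω j * x) := by
  rw [iteratedDeriv_fun_sum fun j _ => by fun_prop]
  refine Finset.sum_congr rfl fun j _ => ?_
  rw [iteratedDeriv_const_mul_field, iteratedDeriv_comp_const_mul hf, mul_assoc]

theorem Real.iteratedDeriv_cos_zero_of_odd {n : ℕ} (hn : Odd n) :
    iteratedDeriv n Real.cos 0 = 0 := by
  obtain ⟨m, rfl⟩ := hn
  simp

section SineCosineResidual

open Real Finset

variable {ι : Type*} (s : Finset ι) (a b ω : ι → ℝ)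

theorem iteratedDeriv_succ_sum_sin_sub_mul_sum_cos_zero (n : ℕ) :
    iteratedDeriv (n + 1)
        (fun z => ∑ j ∈ s, a j * sin (ω j * z) - z * ∑ j ∈ s, b j * cos (ω j * z)) 0
      = iteratedDeriv n cos 0
          * (∑ j ∈ s, a j * ω j ^ (n + 1) - (n + 1) * ∑ j ∈ s, b j * ω j ^ n) := by
  rw [iteratedDeriv_fun_sub (by fun_prop) (by fun_prop),
    iteratedDeriv_sum_mul_comp_const_mul contDiff_sin,
    iteratedDeriv_succ_id_mul_zero (by fun_prop),
    iteratedDeriv_sum_mul_comp_const_mul contDiff_cos]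
  simp only [mul_zero, iteratedDeriv_add_one_sin, mul_sub, mul_left_comm _ ((n : ℝ) + 1), mul_sum]
  congr 1 <;> exact sum_congr rfl fun j _ => by ring

theorem sum_sin_sub_mul_sum_cos_isBigO {M : ℕ}
    (h : ∀ m < M, ∑ j ∈ s, a j * ω j ^ (2 * m + 1) = (2 * m + 1) * ∑ j ∈ s, b j * ω j ^ (2 * m)) :
    (fun z => ∑ j ∈ s, a j * sin (ω j * z) - z * ∑ j ∈ s, b j * cos (ω j * z))
      =O[𝓝 0] fun z => z ^ (2 * M + 1) := by
  simpa using isBigO_pow_of_iteratedDeriv_eq_zero (x₀ := 0) (by fun_prop) fun k hk => by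
    rcases k with _ | n
    · simp
    rw [iteratedDeriv_succ_sum_sin_sub_mul_sum_cos_zero]
    rcases Nat.even_or_odd' n with ⟨m, rfl | rfl⟩
    · rw [h m (by omega)]
      push_cast
      ring
    · rw [iteratedDeriv_cos_zero_of_odd (by simp), zero_mul]

end SineCosineResidual

theorem Asymptotics.IsBigO.div_sub_of_sub_mul {α 𝕜 : Type*} [NormedField 𝕜] {l : Filter α}
    {N D y g : α → 𝕜} {c : 𝕜} (hD : Tendsto D l (𝓝 c)) (hc : c ≠ 0)
    (h : (fun x => N x - y x * D x) =O[l] g) : (fun x => N x / D x - y x) =O[l] g := by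
  refine (h.mul ((hD.inv₀ hc).isBigO_one 𝕜)).congr' ?_ (by simp)
  filter_upwards [hD.eventually_ne hc] with x hx
  field_simp

/-- The numerical wavenumber of the C14 compact scheme agrees with the exact
wavenumber `z` up to `O(z^15)` as `z → 0`. -/
theorem c14_wavenumber (K : ℝ → ℝ)
    (hK : ∀ z : ℝ, K z = ((31/25) * Real.sin z + (67/125) * Real.sin (2*z) + (283/6125) * Real.sin (3*z) + (1/4900) * Real.sin (4*z)) / (1 + (6/5) * Real.cos z + (6/25) * Real.cos (2*z) + (2/175) * Real.cos (3*z))) :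
    (fun z : ℝ => K z - z) =O[𝓝 (0 : ℝ)] fun z : ℝ => z ^ 15 := by
  -- Frequency `j` carries weight `a j = 2 aⱼ` in `N` and `b j = 2 αⱼ` in `D`; the constant `1`
  -- of `D` sits at frequency `0`, where `0 ^ 0 = 1` makes the `m = 0` condition come out right.
  set a : Fin 5 → ℝ := ![0, 31/25, 67/125, 283/6125, 1/4900]
  set b : Fin 5 → ℝ := ![1, 6/5, 6/25, 2/175, 0]
  have hres := sum_sin_sub_mul_sum_cos_isBigO Finset.univ a b (fun j => j) (M := 7) fun m hm => by
    interval_cases m <;> simp [a, b, Fin.sum_univ_five] <;> norm_num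
  have hD : Tendsto (fun z => ∑ j, b j * Real.cos (j * z)) (𝓝 0) (𝓝 (∑ j, b j)) := by
    simpa using (Continuous.tendsto (by fun_prop) 0 :
      Tendsto (fun z : ℝ => ∑ j, b j * Real.cos (j * z)) _ _)
  refine (hres.div_sub_of_sub_mul hD ?_).congr_left fun z => ?_
  · simp [b, Fin.sum_univ_five]
    norm_num
  · simp [hK, a, b, Fin.sum_univ_five]
end

section
/- The numerical wavenumber of the sixteenth-order compact scheme C16 (α₁ = 16/25, α₂ = 4/25, α₃ = 16/1225, α₄ = 1/4900, a₁ = 72/125, a₂ = 38/125, a₃ = 1784/42875, a₄ = 761/686000), K(z) = ((144/125)·sin z + (76/125)·sin 2z + (3568/42875)·sin 3z + (761/343000)·sin 4z) / (1 + (32/25)·cos z + (8/25)·cos 2z + (32/1225)·cos 3z + (1/2450)·cos 4z), satisfies K(z) − z = O(z¹⁷) as z → 0. -/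
/-!
Write `K = N / D`. Then `K z - z = (N z - z * D z) / D z`, and the sine and cosine series give
`N z - z * D z = ∑ₙ (-1)ⁿ / (2n+1)! * (Aₙ - (2n+1) * Bₙ) * z ^ (2n+1)`, where `Aₙ = ∑ₖ 2 aₖ k^(2n+1)`
and `Bₙ = δₙ₀ + ∑ₖ 2 αₖ k^(2n)` are moments of the explicit and implicit weights. The order
conditions `Aₙ = (2n+1) Bₙ` for `n < m` remove every term below `z ^ (2m+1)`, and since `D 0 ≠ 0`
dividing by `D` preserves the bound. The C16 weights satisfy the order conditions for `n < 8`.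
-/

open Filter Asymptotics Topology

theorem isBigO_pow_of_hasSum {c : ℕ → ℝ} {e : ℕ → ℕ} {f : ℝ → ℝ} {m : ℕ}
    (hf : ∀ z, HasSum (fun n => c n * z ^ e n) (f z)) (hc : ∀ n, c n ≠ 0 → m ≤ e n) :
    f =O[𝓝 0] (· ^ m) := by
  have habs : HasSum (fun n => |c n|) (∑' n, |c n|) :=
    (summable_abs_iff.2 (by simpa using (hf 1).summable)).hasSum
  refine isBigO_iff.2 ⟨∑' n, |c n|, ?_⟩
  filter_upwards [Metric.closedBall_mem_nhds (0 : ℝ) one_pos] with z hz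
  rw [Metric.mem_closedBall, dist_zero_right] at hz
  rw [norm_pow]
  refine (hf z).norm_le_of_bounded (habs.mul_right (‖z‖ ^ m)) fun n => ?_
  rw [norm_mul, norm_pow, Real.norm_eq_abs]
  rcases eq_or_ne (c n) 0 with h | h
  · simp [h]
  · exact mul_le_mul_of_nonneg_left (pow_le_pow_of_le_one (norm_nonneg z) hz (hc n h))
      (abs_nonneg _)

namespace CompactScheme

-- `α i` and `a i` are the paper's weights `α_{i+1}` and `a_{i+1}` of the stencil offset `i + 1`.
variable {s : ℕ} (α a : Fin s → ℝ)

noncomputable def numerator (z : ℝ) : ℝ := ∑ i, 2 * a i * Real.sin ((i + 1 : ℕ) * z)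

noncomputable def denominator (z : ℝ) : ℝ := 1 + ∑ i, 2 * α i * Real.cos ((i + 1 : ℕ) * z)

noncomputable def wavenumber (z : ℝ) : ℝ := numerator a z / denominator α z

def explicitMoment (n : ℕ) : ℝ := ∑ i, 2 * a i * ((i + 1 : ℕ) : ℝ) ^ (2 * n + 1)

-- The central coefficient `1` of the implicit side contributes only to the zeroth moment.
def implicitMoment (n : ℕ) : ℝ :=
  (if n = 0 then 1 else 0) + ∑ i, 2 * α i * ((i + 1 : ℕ) : ℝ) ^ (2 * n)

theorem hasSum_numerator (z : ℝ) :
    HasSum (fun n => (-1) ^ n * explicitMoment a n / (2 * n + 1).factorial * z ^ (2 * n + 1))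
      (numerator a z) := by
  refine (hasSum_sum fun (i : Fin s) _ =>
    (Real.hasSum_sin ((i + 1 : ℕ) * z)).mul_left (2 * a i)).congr_fun fun n => ?_
  simp only [explicitMoment, Finset.mul_sum, Finset.sum_div, Finset.sum_mul]
  exact Finset.sum_congr rfl fun i _ => by ring

theorem hasSum_denominator (z : ℝ) :
    HasSum (fun n => (-1) ^ n * implicitMoment α n / (2 * n).factorial * z ^ (2 * n))
      (denominator α z) := by
  refine ((hasSum_ite_eq 0 (1 : ℝ)).add (hasSum_sum fun (i : Fin s) _ =>
    (Real.hasSum_cos ((i + 1 : ℕ) * z)).mul_left (2 * α i))).congr_fun fun n => ?_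
  rcases eq_or_ne n 0 with rfl | hn
  · simp [implicitMoment]
  simp only [implicitMoment, hn, if_false, zero_add, Finset.mul_sum, Finset.sum_div, Finset.sum_mul]
  exact Finset.sum_congr rfl fun i _ => by ring

theorem hasSum_numerator_sub_mul_denominator (z : ℝ) :
    HasSum (fun n => (-1) ^ n / (2 * n + 1).factorial *
        (explicitMoment a n - (2 * n + 1) * implicitMoment α n) * z ^ (2 * n + 1))
      (numerator a z - z * denominator α z) := by
  refine ((hasSum_numerator a z).sub ((hasSum_denominator α z).mul_left z)).congr_fun fun n => ?_
  rw [Nat.factorial_succ]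
  push_cast
  field_simp
  ring

theorem wavenumber_sub_isBigO {m : ℕ} (h0 : denominator α 0 ≠ 0)
    (horder : ∀ n < m, explicitMoment a n = (2 * n + 1) * implicitMoment α n) :
    (fun z => wavenumber α a z - z) =O[𝓝 0] (· ^ (2 * m + 1)) := by
  have hE : (fun z => numerator a z - z * denominator α z) =O[𝓝 0] (· ^ (2 * m + 1)) := by
    refine isBigO_pow_of_hasSum (hasSum_numerator_sub_mul_denominator α a) fun n hn => ?_
    contrapose! hn
    rw [horder n (by omega), sub_self, mul_zero]
  have hD : ContinuousAt (denominator α) 0 := by unfold denominator; fun_prop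
  have hDinv : (fun z => (denominator α z)⁻¹) =O[𝓝 0] fun _ => (1 : ℝ) :=
    (hD.inv₀ h0).tendsto.isBigO_one ℝ
  refine (hE.mul hDinv).congr' ?_ (by simp)
  filter_upwards [hD.eventually_ne h0] with z hz
  rw [wavenumber]
  field_simp

end CompactScheme

noncomputable def c16Implicit : Fin 4 → ℝ := ![16/25, 4/25, 16/1225, 1/4900]

noncomputable def c16Explicit : Fin 4 → ℝ := ![72/125, 38/125, 1784/42875, 761/686000]

theorem c16_order_conditions (n : ℕ) (hn : n < 8) :
    CompactScheme.explicitMoment c16Explicit n =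
      (2 * n + 1) * CompactScheme.implicitMoment c16Implicit n := by
  interval_cases n <;>
    norm_num [CompactScheme.explicitMoment, CompactScheme.implicitMoment, Fin.sum_univ_four,
      c16Explicit, c16Implicit, Matrix.cons_val_two, Matrix.cons_val_three]

theorem c16_denominator_zero_ne_zero : CompactScheme.denominator c16Implicit 0 ≠ 0 := by
  norm_num [CompactScheme.denominator, Fin.sum_univ_four, c16Implicit, Matrix.cons_val_two,
    Matrix.cons_val_three]

/-- The numerical wavenumber of the C16 compact scheme agrees with the exact
wavenumber `z` up to `O(z^17)` as `z → 0`. -/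
theorem c16_wavenumber (K : ℝ → ℝ)
    (hK : ∀ z : ℝ, K z = ((144/125) * Real.sin z + (76/125) * Real.sin (2*z) + (3568/42875) * Real.sin (3*z) + (761/343000) * Real.sin (4*z)) / (1 + (32/25) * Real.cos z + (8/25) * Real.cos (2*z) + (32/1225) * Real.cos (3*z) + (1/2450) * Real.cos (4*z))) :
    (fun z : ℝ => K z - z) =O[𝓝 (0 : ℝ)] fun z : ℝ => z ^ 17 := by
  have hK' : K = CompactScheme.wavenumber c16Implicit c16Explicit := by
    funext z
    simp [hK, CompactScheme.wavenumber, CompactScheme.numerator, CompactScheme.denominator,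
      Fin.sum_univ_four, c16Implicit, c16Explicit]
    ring_nf
  rw [hK']
  exact CompactScheme.wavenumber_sub_isBigO _ _ c16_denominator_zero_ne_zero c16_order_conditions
end

section
/- Let β = 1/2 − 1/(2√3) (the PC4 coefficient, with b₁ = 1) and for z ∈ ℝ set D(z) = (1 − β) + β·e^{iz}. Then for every real z, D(z) ≠ 0 and Im[(e^{iz} − 1)·conj(D(z))] / |D(z)|² = (3/2)·sin z / (1 + (1/2)·cos z); that is, the averaged numerical wavenumber of the prefactored PC4 scheme equals exactly the numerical wavenumber of the classical fourth-order compact scheme C4 (α₁ = 1/4, a₁ = 3/4). -/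
/-!
Writing `D(z) = (1 - β) + β e^{iz}`, the numerator `Im[(e^{iz} - 1) conj D(z)]` equals `sin z` for
every `β`, while `|D(z)|² = 1 - 2β(1 - β)(1 - cos z)`. The PC4 coefficient is a root of
`β(1 - β) = 1/6`, so `|D(z)|² = (2/3)(1 + cos z / 2)`, which is positive and turns the quotient
into the C4 wavenumber.
-/

open Complex

theorem normSq_one_sub_add_mul_exp (β z : ℝ) :
    normSq (((1 - β : ℝ) : ℂ) + β * exp (I * z)) = 1 - 2 * β * (1 - β) * (1 - Real.cos z) := by
  rw [mul_comm I, exp_mul_I, ← ofReal_cos, ← ofReal_sin, normSq_apply]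
  simp only [add_re, add_im, mul_re, mul_im, ofReal_re, ofReal_im, I_re, I_im]
  linear_combination β ^ 2 * Real.sin_sq_add_cos_sq z

theorem im_exp_sub_one_mul_conj_one_sub_add_mul_exp (β z : ℝ) :
    ((exp (I * z) - 1) * (starRingEnd ℂ) (((1 - β : ℝ) : ℂ) + β * exp (I * z))).im
      = Real.sin z := by
  rw [mul_comm I, exp_mul_I, ← ofReal_cos, ← ofReal_sin]
  simp only [mul_im, mul_re, sub_re, sub_im, add_re, add_im, conj_re, conj_im, ofReal_re,
    ofReal_im, I_re, I_im, one_re, one_im]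
  ring

theorem pc4_coeff_mul_one_sub {β : ℝ} (hβ : β = 1/2 - 1/(2 * Real.sqrt 3)) :
    β * (1 - β) = 1/6 := by
  have h3 : Real.sqrt 3 ^ 2 = 3 := Real.sq_sqrt (by norm_num)
  subst hβ
  field_simp
  linear_combination 2 * h3

/-- The averaged numerical wavenumber of the prefactored PC4 scheme
(`β = 1/2 − 1/(2√3)`, `b₁ = 1`) equals exactly the numerical wavenumber of the
classical fourth-order compact scheme C4 (`α₁ = 1/4`, `a₁ = 3/4`). -/
theorem pc4_averaged_wavenumber_eq_c4
    (β : ℝ) (hβ : β = 1/2 - 1/(2 * Real.sqrt 3))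
    (D : ℝ → ℂ)
    (hD : ∀ z : ℝ, D z = ((1 - β : ℝ) : ℂ) + (β : ℂ) * Complex.exp (Complex.I * (z : ℂ))) :
    ∀ z : ℝ, D z ≠ 0 ∧
      ((Complex.exp (Complex.I * (z : ℂ)) - 1) * (starRingEnd ℂ) (D z)).im /
          ‖D z‖ ^ 2
        = ((3/2) * Real.sin z) / (1 + (1/2) * Real.cos z) := by
  intro z
  have hnorm : ‖D z‖ ^ 2 = 2/3 * (1 + 1/2 * Real.cos z) := by
    rw [Complex.sq_norm, hD, normSq_one_sub_add_mul_exp]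
    linear_combination (2 * Real.cos z - 2) * pc4_coeff_mul_one_sub hβ
  have hpos : 0 < 1 + 1/2 * Real.cos z := by linarith [Real.neg_one_le_cos z]
  refine ⟨fun h => ?_, ?_⟩
  · rw [h, norm_zero] at hnorm
    linarith
  · rw [hnorm, hD, im_exp_sub_one_mul_conj_one_sub_add_mul_exp]
    field_simp
end

section
/- Let β = 1/2 − 1/(2√5), b₂ = 1/(30(1 − β)), b₁ = 14/15 − 2β·b₂ (the PC6 coefficients) and for z ∈ ℝ set D(z) = (1 − β) + β·e^{iz} and N(z) = b₁(e^{iz} − 1) + b₂(e^{2iz} − 1). Then for every real z, D(z) ≠ 0 and Im[N(z)·conj(D(z))] / |D(z)|² = ((14/9)·sin z + (1/18)·sin 2z) / (1 + (2/3)·cos z); that is, the averaged numerical wavenumber of the prefactored PC6 scheme equals exactly the numerical wavenumber of the classical sixth-order compact scheme C6 (α₁ = 1/3, a₁ = 7/9, a₂ = 1/36). -/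
/-!
For arbitrary coefficients, with `c = cos z` and `s = sin z`, a direct computation gives
`Im (N · conj D) = s ((b₁ + 2βb₂) + 2b₂(1 - β) c)` and `|D|² = 1 - 2β(1 - β)(1 - c)`.
The PC6 coefficients satisfy `β(1 - β) = 1/5`, `b₁ + 2βb₂ = 14/15` and `2b₂(1 - β) = 1/15`,
so `|D|² = (3/5)(1 + (2/3) c) ≥ 1/5` and the quotient is `s (14/9 + c/9) / (1 + (2/3) c)`,
which is the C6 wavenumber because `sin 2z = 2 s c`.
-/

open Complex

namespace PrefactoredScheme

-- The Fourier symbols `D` and `N` of the forward prefactored scheme of stencil width two.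
noncomputable def denom (β z : ℝ) : ℂ := ((1 - β : ℝ) : ℂ) + (β : ℂ) * exp (I * (z : ℂ))

noncomputable def numer (b₁ b₂ z : ℝ) : ℂ :=
  (b₁ : ℂ) * (exp (I * (z : ℂ)) - 1) + (b₂ : ℂ) * (exp (2 * I * (z : ℂ)) - 1)

lemma exp_I_mul_re (z : ℝ) : (exp (I * z)).re = Real.cos z := by
  rw [mul_comm, exp_ofReal_mul_I_re]

lemma exp_I_mul_im (z : ℝ) : (exp (I * z)).im = Real.sin z := by
  rw [mul_comm, exp_ofReal_mul_I_im]

lemma exp_two_I_mul_re (z : ℝ) : (exp (2 * I * z)).re = Real.cos (2 * z) := by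
  rw [← exp_I_mul_re, ofReal_mul, ofReal_ofNat, mul_left_comm, mul_assoc]

lemma exp_two_I_mul_im (z : ℝ) : (exp (2 * I * z)).im = Real.sin (2 * z) := by
  rw [← exp_I_mul_im, ofReal_mul, ofReal_ofNat, mul_left_comm, mul_assoc]

lemma denom_re (β z : ℝ) : (denom β z).re = 1 - β + β * Real.cos z := by
  simp [denom, exp_I_mul_re]

lemma denom_im (β z : ℝ) : (denom β z).im = β * Real.sin z := by
  simp [denom, exp_I_mul_im]

lemma numer_re (b₁ b₂ z : ℝ) :
    (numer b₁ b₂ z).re = b₁ * (Real.cos z - 1) + b₂ * (Real.cos (2 * z) - 1) := by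
  simp [numer, exp_I_mul_re, exp_two_I_mul_re]

lemma numer_im (b₁ b₂ z : ℝ) :
    (numer b₁ b₂ z).im = b₁ * Real.sin z + b₂ * Real.sin (2 * z) := by
  simp [numer, exp_I_mul_im, exp_two_I_mul_im]

lemma norm_denom_sq (β z : ℝ) :
    ‖denom β z‖ ^ 2 = 1 - 2 * (β * (1 - β)) * (1 - Real.cos z) := by
  rw [Complex.sq_norm, normSq_apply, denom_re, denom_im]
  linear_combination β ^ 2 * Real.sin_sq_add_cos_sq z

lemma im_numer_mul_conj_denom (β b₁ b₂ z : ℝ) :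
    (numer b₁ b₂ z * starRingEnd ℂ (denom β z)).im
      = Real.sin z * ((b₁ + 2 * β * b₂) + 2 * b₂ * (1 - β) * Real.cos z) := by
  rw [mul_im, conj_re, conj_im, numer_re, numer_im, denom_re, denom_im, Real.sin_two_mul,
    Real.cos_two_mul]
  ring

end PrefactoredScheme

open PrefactoredScheme in
/-- The averaged numerical wavenumber of the prefactored PC6 scheme
(`β = 1/2 − 1/(2√5)`, `b₂ = 1/(30(1−β))`, `b₁ = 14/15 − 2β·b₂`) equals exactly the
numerical wavenumber of the classical sixth-order compact scheme C6
(`α₁ = 1/3`, `a₁ = 7/9`, `a₂ = 1/36`). -/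
theorem pc6_averaged_wavenumber_eq_c6
    (β b₁ b₂ : ℝ)
    (hβ : β = 1/2 - 1/(2 * Real.sqrt 5))
    (hb₂ : b₂ = 1/(30 * (1 - β)))
    (hb₁ : b₁ = 14/15 - 2 * β * b₂)
    (D N : ℝ → ℂ)
    (hD : ∀ z : ℝ, D z = ((1 - β : ℝ) : ℂ) + (β : ℂ) * Complex.exp (Complex.I * (z : ℂ)))
    (hN : ∀ z : ℝ, N z = (b₁ : ℂ) * (Complex.exp (Complex.I * (z : ℂ)) - 1)
        + (b₂ : ℂ) * (Complex.exp (2 * Complex.I * (z : ℂ)) - 1)) :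
    ∀ z : ℝ, D z ≠ 0 ∧
      (N z * (starRingEnd ℂ) (D z)).im / ‖D z‖ ^ 2
        = ((14/9) * Real.sin z + (1/18) * Real.sin (2*z)) / (1 + (2/3) * Real.cos z) := by
  intro z
  have hβ_mul : β * (1 - β) = 1 / 5 := by
    have h5 : Real.sqrt 5 ^ 2 = 5 := Real.sq_sqrt (by norm_num)
    rw [hβ]
    field_simp
    linear_combination h5
  have hb₁' : b₁ + 2 * β * b₂ = 14 / 15 := by rw [hb₁]; ring
  have hb₂' : 2 * b₂ * (1 - β) = 1 / 15 := by
    have : 1 - β ≠ 0 := right_ne_zero_of_mul (hβ_mul.trans_ne (by norm_num))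
    rw [hb₂]; field_simp; norm_num
  have hpos : 0 < 1 + 2 / 3 * Real.cos z := by linarith [Real.neg_one_le_cos z]
  have hnorm : ‖D z‖ ^ 2 = 3 / 5 * (1 + 2 / 3 * Real.cos z) := by
    rw [hD, ← denom, norm_denom_sq, hβ_mul]; ring
  refine ⟨fun h0 => ?_, ?_⟩
  · rw [h0, norm_zero] at hnorm
    nlinarith
  rw [hnorm, hN, ← numer, hD, ← denom, im_numer_mul_conj_denom, hb₁', hb₂', Real.sin_two_mul]
  field_simp
  ring
end

section
/- Let a = 1/2 − 1/(2√5), b = 1 − 1/(30a), c = 0 (Hixon's sixth-order prefactored coefficients) and for z ∈ ℝ set D(z) = a·e^{iz} + (1 − a) and N(z) = b·e^{iz} − (2b − 1) − (1 − b)·e^{−iz}. Then for every real z, D(z) ≠ 0 and Im[N(z)·conj(D(z))] / |D(z)|² = ((14/9)·sin z + (1/18)·sin 2z) / (1 + (2/3)·cos z); that is, the averaged numerical wavenumber of Hixon's prefactored scheme equals exactly the numerical wavenumber of the classical sixth-order compact scheme C6. -/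
open Complex

/-! For arbitrary `a, b` (and `c = 0`) one has `|D|² = 1 - 2a(1-a)(1 - cos z)` and
`Im (N·conj D) = sin z·(1 - 2a(1-b)(1 - cos z))`. Hixon's coefficients satisfy
`a(1-a) = 1/5` and `a(1-b) = 1/30`, which turns the quotient
into `sin z (14 + cos z) / (3 (3 + 2 cos z))`, the C6 wavenumber. -/

noncomputable def implicitSymbol (a z : ℝ) : ℂ :=
  (a : ℂ) * exp (I * (z : ℂ)) + ((1 - a : ℝ) : ℂ)

noncomputable def explicitSymbol (b z : ℝ) : ℂ :=
  (b : ℂ) * exp (I * (z : ℂ)) - ((2*b - 1 : ℝ) : ℂ) - ((1 - b : ℝ) : ℂ) * exp (-(I * (z : ℂ)))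

section Symbols

variable (a b z : ℝ)

lemma implicitSymbol_re : (implicitSymbol a z).re = a * Real.cos z + (1 - a) := by
  simp [implicitSymbol, exp_re, exp_im]

lemma implicitSymbol_im : (implicitSymbol a z).im = a * Real.sin z := by
  simp [implicitSymbol, exp_re, exp_im]

lemma explicitSymbol_re :
    (explicitSymbol b z).re = b * Real.cos z - (2*b - 1) - (1 - b) * Real.cos z := by
  simp [explicitSymbol, exp_re, exp_im]

lemma explicitSymbol_im : (explicitSymbol b z).im = Real.sin z := by
  simp [explicitSymbol, exp_re, exp_im, ← add_mul]

lemma normSq_implicitSymbol :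
    normSq (implicitSymbol a z) = 1 - 2 * (a * (1 - a)) * (1 - Real.cos z) := by
  rw [normSq_apply, implicitSymbol_re, implicitSymbol_im]
  linear_combination a ^ 2 * Real.sin_sq_add_cos_sq z

lemma im_explicitSymbol_mul_conj_implicitSymbol :
    (explicitSymbol b z * (starRingEnd ℂ) (implicitSymbol a z)).im
      = Real.sin z * (1 - 2 * (a * (1 - b)) * (1 - Real.cos z)) := by
  rw [mul_im, conj_re, conj_im, explicitSymbol_re, explicitSymbol_im, implicitSymbol_re,
    implicitSymbol_im]
  ring

end Symbols

lemma mul_one_sub_eq_one_fifth {a : ℝ} (ha : a = 1/2 - 1/(2 * Real.sqrt 5)) :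
    a * (1 - a) = 1/5 := by
  have h5 : Real.sqrt 5 ^ 2 = 5 := Real.sq_sqrt (by norm_num)
  rw [ha]
  field_simp
  linear_combination h5

lemma c6_wavenumber_eq_div (z : ℝ) (hz : 0 < 3 + 2 * Real.cos z) :
    Real.sin z * (1 - 2 * (1/30) * (1 - Real.cos z)) / (1 - 2 * (1/5) * (1 - Real.cos z))
      = ((14/9) * Real.sin z + (1/18) * Real.sin (2*z)) / (1 + (2/3) * Real.cos z) := by
  rw [Real.sin_two_mul, div_eq_div_iff (by linarith) (by linarith)]
  ring

theorem hixon_averaged_wavenumber_eq_c6_general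
    (a b : ℝ)
    (ha : a = 1/2 - 1/(2 * Real.sqrt 5))
    (hb : b = 1 - 1/(30 * a))
    (D N : ℝ → ℂ)
    (hD : ∀ z : ℝ, D z = (a : ℂ) * Complex.exp (Complex.I * (z : ℂ)) + ((1 - a : ℝ) : ℂ))
    (hN : ∀ z : ℝ, N z = (b : ℂ) * Complex.exp (Complex.I * (z : ℂ)) - ((2*b - 1 : ℝ) : ℂ)
        - ((1 - b : ℝ) : ℂ) * Complex.exp (-(Complex.I * (z : ℂ)))) :
    ∀ z : ℝ, D z ≠ 0 ∧
      (N z * (starRingEnd ℂ) (D z)).im / ‖D z‖ ^ 2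
        = ((14/9) * Real.sin z + (1/18) * Real.sin (2*z)) / (1 + (2/3) * Real.cos z) := by
  have hA : a * (1 - a) = 1/5 := mul_one_sub_eq_one_fifth ha
  have ha0 : a ≠ 0 := by rintro rfl; norm_num at hA
  have hB : a * (1 - b) = 1/30 := by rw [hb]; field_simp; ring
  obtain rfl : D = implicitSymbol a := funext hD
  obtain rfl : N = explicitSymbol b := funext hN
  intro z
  have hcos : 0 < 3 + 2 * Real.cos z := by linarith [Real.neg_one_le_cos z]
  have hpos : 0 < normSq (implicitSymbol a z) := by
    rw [normSq_implicitSymbol, hA]; linarith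
  refine ⟨normSq_pos.mp hpos, ?_⟩
  rw [Complex.sq_norm, normSq_implicitSymbol, im_explicitSymbol_mul_conj_implicitSymbol, hA, hB]
  exact c6_wavenumber_eq_div z hcos

/-- The averaged numerical wavenumber of Hixon's sixth-order prefactored scheme
(`a = 1/2 − 1/(2√5)`, `b = 1 − 1/(30a)`, `c = 0`) equals exactly the numerical
wavenumber of the classical sixth-order compact scheme C6. -/
theorem hixon_averaged_wavenumber_eq_c6
    (a b c : ℝ)
    (ha : a = 1/2 - 1/(2 * Real.sqrt 5))
    (hb : b = 1 - 1/(30 * a))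
    (hc : c = 0)
    (D N : ℝ → ℂ)
    (hD : ∀ z : ℝ, D z = (a : ℂ) * Complex.exp (Complex.I * (z : ℂ)) + ((1 - a : ℝ) : ℂ))
    (hN : ∀ z : ℝ, N z = (b : ℂ) * Complex.exp (Complex.I * (z : ℂ)) - ((2*b - 1 : ℝ) : ℂ)
        - ((1 - b : ℝ) : ℂ) * Complex.exp (-(Complex.I * (z : ℂ)))) :
    ∀ z : ℝ, D z ≠ 0 ∧
      (N z * (starRingEnd ℂ) (D z)).im / ‖D z‖ ^ 2
        = ((14/9) * Real.sin z + (1/18) * Real.sin (2*z)) / (1 + (2/3) * Real.cos z) :=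
  hixon_averaged_wavenumber_eq_c6_general a b ha hb D N hD hN
end

section
/- Let β = 1/2 − 1/(2√5), b₂ = 1/(30(1 − β)), b₁ = 14/15 − 2β·b₂, and define the averaged numerical wavenumber of the prefactored PC6 scheme by K̄(z) = Im[(b₁(e^{iz} − 1) + b₂(e^{2iz} − 1))·conj((1 − β) + β·e^{iz})] / |(1 − β) + β·e^{iz}|². Then K̄(z) − z = O(z⁷) as z → 0; that is, the prefactored PC6 scheme preserves the sixth order of accuracy of the original compact scheme. -/
/-!
Expanding the two Fourier symbols shows that the averaged wavenumber of the prefactored scheme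
equals `((b₁ + 2βb₂) sin z + (1 - β)b₂ sin 2z) / (1 - 2β(1 - β)(1 - cos z))`, which for the PC6
coefficients is the modified wavenumber of the classical sixth-order tridiagonal compact scheme.
Its numerator minus `z` times its denominator is a combination of the Taylor remainders of
`sin z`, `sin 2z` and `z cos z`, all `O(z⁷)`, the polynomial parts cancelling exactly, while the
denominator stays near `1`.
-/

open Complex Filter Asymptotics Topology

theorem Complex.exp_sub_sum_range_isBigO {n : ℕ} (hn : 0 < n) :
    (fun x : ℂ => exp x - ∑ m ∈ Finset.range n, x ^ m / m.factorial) =O[𝓝 0] (· ^ n) := by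
  refine IsBigO.of_bound (n.succ * (n.factorial * n : ℝ)⁻¹) ?_
  filter_upwards [Metric.closedBall_mem_nhds (0 : ℂ) one_pos] with x hx
  simpa [mul_comm, norm_pow] using exp_bound (by simpa using hx) hn

theorem Complex.exp_ofReal_mul_I_sub_sum_range_isBigO {n : ℕ} (hn : 0 < n) :
    (fun x : ℝ => exp (x * I) - ∑ m ∈ Finset.range n, ((x : ℂ) * I) ^ m / m.factorial)
      =O[𝓝 0] (· ^ n) := by
  have hI : Tendsto (fun x : ℝ => (x : ℂ) * I) (𝓝 0) (𝓝 0) :=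
    (by fun_prop : Continuous fun x : ℝ => (x : ℂ) * I).tendsto' 0 0 (by simp)
  refine ((exp_sub_sum_range_isBigO hn).comp_tendsto hI).trans (isBigO_of_le _ fun x => ?_)
  simp [norm_pow]

theorem Real.sin_sub_taylor_isBigO :
    (fun x : ℝ => Real.sin x - (x - x ^ 3 / 6 + x ^ 5 / 120)) =O[𝓝 0] (· ^ 7) := by
  refine (isBigO_of_le _ fun x => ?_).trans
    (Complex.exp_ofReal_mul_I_sub_sum_range_isBigO (n := 7) (by norm_num))
  refine le_of_eq_of_le ?_ (abs_im_le_norm _)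
  simp [Finset.sum_range_succ, Nat.factorial, pow_succ]
  ring_nf

theorem Real.cos_sub_taylor_isBigO :
    (fun x : ℝ => Real.cos x - (1 - x ^ 2 / 2 + x ^ 4 / 24)) =O[𝓝 0] (· ^ 6) := by
  refine (isBigO_of_le _ fun x => ?_).trans
    (Complex.exp_ofReal_mul_I_sub_sum_range_isBigO (n := 6) (by norm_num))
  refine le_of_eq_of_le ?_ (abs_re_le_norm _)
  simp [Finset.sum_range_succ, Nat.factorial, pow_succ]
  ring_nf

theorem im_prefactored_numerator_mul_conj (β b₁ b₂ z : ℝ) :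
    (((b₁ : ℂ) * (exp (I * z) - 1) + (b₂ : ℂ) * (exp (2 * I * z) - 1)) *
      (starRingEnd ℂ) (((1 - β : ℝ) : ℂ) + (β : ℂ) * exp (I * z))).im
      = (b₁ + 2 * β * b₂) * Real.sin z + (1 - β) * b₂ * Real.sin (2 * z) := by
  have h2 : 2 * I * (z : ℂ) = ((2 * z : ℝ) : ℂ) * I := by push_cast; ring
  rw [mul_comm I, h2]
  simp only [mul_im, mul_re, add_re, add_im, sub_re, sub_im, one_re, one_im,
    exp_ofReal_mul_I_re, exp_ofReal_mul_I_im, ofReal_re, ofReal_im, conj_re, conj_im]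
  rw [Real.sin_two_mul, Real.cos_two_mul]
  ring

theorem norm_prefactored_denominator_sq (β z : ℝ) :
    ‖((1 - β : ℝ) : ℂ) + (β : ℂ) * exp (I * z)‖ ^ 2
      = 1 - 2 * (β * (1 - β)) * (1 - Real.cos z) := by
  rw [mul_comm I, Complex.sq_norm, normSq_apply]
  simp only [mul_im, mul_re, add_re, add_im, exp_ofReal_mul_I_re, exp_ofReal_mul_I_im,
    ofReal_re, ofReal_im]
  linear_combination β ^ 2 * Real.sin_sq_add_cos_sq z

/-- Lele's tridiagonal scheme `α = 1/3`, `a = 14/9`, `b = 1/9`, with numerator and denominator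
scaled by `3/5`. -/
noncomputable def compact6Wavenumber (z : ℝ) : ℝ :=
  (14 / 15 * Real.sin z + 1 / 30 * Real.sin (2 * z)) / (3 / 5 + 2 / 5 * Real.cos z)

theorem compact6Wavenumber_sub_isBigO :
    (fun z => compact6Wavenumber z - z) =O[𝓝 0] (· ^ 7) := by
  have hsin2 : (fun z : ℝ => Real.sin (2 * z) - (2 * z - (2 * z) ^ 3 / 6 + (2 * z) ^ 5 / 120))
      =O[𝓝 0] (· ^ 7) := by
    have h2 : Tendsto (fun z : ℝ => 2 * z) (𝓝 0) (𝓝 0) :=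
      (continuous_const_mul 2).tendsto' 0 0 (mul_zero 2)
    refine (Real.sin_sub_taylor_isBigO.comp_tendsto h2).trans ?_
    simpa [Function.comp_def, mul_pow] using isBigO_const_mul_self (2 ^ 7 : ℝ) (· ^ 7) (𝓝 0)
  have hcos : (fun z : ℝ => z * (Real.cos z - (1 - z ^ 2 / 2 + z ^ 4 / 24))) =O[𝓝 0] (· ^ 7) := by
    simpa [pow_succ'] using (isBigO_refl (fun z : ℝ => z) _).mul Real.cos_sub_taylor_isBigO
  have hnum := ((Real.sin_sub_taylor_isBigO.const_mul_left (14 / 15)).add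
    (hsin2.const_mul_left (1 / 30))).sub (hcos.const_mul_left (2 / 5))
  have hden : (fun z : ℝ => (3 / 5 + 2 / 5 * Real.cos z)⁻¹) =O[𝓝 0] fun _ => (1 : ℝ) :=
    Tendsto.isBigO_one ℝ <| ((continuous_const.add
      (continuous_const.mul Real.continuous_cos)).tendsto 0).inv₀ (by norm_num)
  -- the polynomial parts cancel: these are the order conditions of the sixth-order scheme
  refine (hnum.mul hden).congr (fun z => ?_) (fun z => mul_one _)
  have : 3 / 5 + 2 / 5 * Real.cos z ≠ 0 := by nlinarith [Real.neg_one_le_cos z]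
  rw [compact6Wavenumber, ← div_eq_mul_inv, div_sub' this]
  ring

/-- The averaged numerical wavenumber of the prefactored PC6 scheme
(`β = 1/2 − 1/(2√5)`, `b₂ = 1/(30(1−β))`, `b₁ = 14/15 − 2β·b₂`) agrees with the exact
wavenumber `z` up to `O(z^7)`: the prefactored scheme preserves the sixth order of
accuracy. -/
theorem pc6_averaged_wavenumber_order
    (β b₁ b₂ : ℝ)
    (hβ : β = 1/2 - 1/(2 * Real.sqrt 5))
    (hb₂ : b₂ = 1/(30 * (1 - β)))
    (hb₁ : b₁ = 14/15 - 2 * β * b₂)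
    (Kbar : ℝ → ℝ)
    (hK : ∀ z : ℝ, Kbar z =
      (((b₁ : ℂ) * (Complex.exp (Complex.I * (z : ℂ)) - 1)
          + (b₂ : ℂ) * (Complex.exp (2 * Complex.I * (z : ℂ)) - 1)) *
          (starRingEnd ℂ) (((1 - β : ℝ) : ℂ) + (β : ℂ) * Complex.exp (Complex.I * (z : ℂ)))).im /
        ‖((1 - β : ℝ) : ℂ) + (β : ℂ) * Complex.exp (Complex.I * (z : ℂ))‖ ^ 2) :
    (fun z : ℝ => Kbar z - z) =O[𝓝 (0 : ℝ)] fun z : ℝ => z ^ 7 := by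
  have hβ_mul : β * (1 - β) = 1 / 5 := by
    have h5 : Real.sqrt 5 ^ 2 = 5 := Real.sq_sqrt (by norm_num)
    rw [hβ]
    field_simp
    linear_combination h5
  have hb₂_mul : (1 - β) * b₂ = 1 / 30 := by
    have : 1 - β ≠ 0 := fun h => by simp [h] at hβ_mul
    rw [hb₂]
    field_simp
  have hb₁_add : b₁ + 2 * β * b₂ = 14 / 15 := by rw [hb₁]; ring
  have hKbar : Kbar = compact6Wavenumber := by
    funext z
    rw [hK, im_prefactored_numerator_mul_conj, norm_prefactored_denominator_sq, hβ_mul,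
      hb₂_mul, hb₁_add, compact6Wavenumber]
    ring
  exact hKbar ▸ compact6Wavenumber_sub_isBigO
end
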